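/- arXiv:1101.1482 — 2 statements merged into one kernel-verified Lean document; each statement's English description precedes it below -/
import Mathlib

section
/- Let A be a unital C*-algebra, α : A → A a unital *-endomorphism with ker α an essential ideal of A. Define B = A ⊕ c₀(ℕ, ker α) (as a C*-algebra with coordinatewise operations) and φ_Y : B → L(Y) on Y = A ⊕ c₀(ℕ, ker α) (viewed as a right Hilbert B-module) by φ_Y(a,(cᵢ))(a',(cᵢ')) = (α(a)a', α(a)c₁', c₁c₂', c₂c₃', …). Then there exists no *-homomorphism β : B → B such that φ_Y(b)(b') = β(b)·b' for all b, b' ∈ B. -/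
/-- Membership in `B = A ⊕ c₀(ℕ, ker α)`: the sequence part lies in `ker α` and
vanishes at infinity. -/
def MemTail {A : Type*} [NormedRing A] (α : A → A) (b : A × (ℕ → A)) : Prop :=
  (∀ i, α (b.2 i) = 0) ∧
    Filter.Tendsto (fun i => ‖b.2 i‖) Filter.atTop (nhds 0)

/-- The left action `φ_Y` of the Muhly–Tomforde tail correspondence:
`φ_Y(a,(cᵢ))(a',(cᵢ')) = (α(a)a', α(a)c₁', c₁c₂', c₂c₃', …)`. -/
def tailAction {A : Type*} [NormedRing A] (α : A → A)
    (b b' : A × (ℕ → A)) : A × (ℕ → A) :=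
  (α b.1 * b'.1, fun i => Nat.rec (α b.1 * b'.2 0) (fun k _ => b.2 k * b'.2 (k + 1)) i)

/-- For a unital C*-algebra `A` and a unital *-endomorphism `α` with
`ker α` an essential ideal, there is no *-homomorphism `β` of
`B = A ⊕ c₀(ℕ, ker α)` such that `φ_Y(b)(b') = β(b) · b'` for all `b, b' ∈ B`
(multiplication taken coordinatewise in `B`). -/
theorem no_endomorphism_implementing_tail_action
    {A : Type*} [NormedRing A] [StarRing A] [CStarRing A] [NormedAlgebra ℂ A]
    [CompleteSpace A] [Nontrivial A]
    (α : A →⋆ₐ[ℂ] A)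
    (hess : ∀ x : A, (∀ k : A, α k = 0 → x * k = 0) → x = 0)  -- ker α essential
    : ¬ ∃ β : A × (ℕ → A) → A × (ℕ → A),
        -- β maps B into B and is a *-homomorphism on B:
        (∀ b, MemTail α b → MemTail α (β b)) ∧
        (∀ b b', MemTail α b → MemTail α b' →
          β (b.1 + b'.1, fun i => b.2 i + b'.2 i) =
            ((β b).1 + (β b').1, fun i => (β b).2 i + (β b').2 i)) ∧
        (∀ b b', MemTail α b → MemTail α b' →
          β (b.1 * b'.1, fun i => b.2 i * b'.2 i) =
            ((β b).1 * (β b').1, fun i => (β b).2 i * (β b').2 i)) ∧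
        (∀ b, MemTail α b →
          β (star b.1, fun i => star (b.2 i)) = (star (β b).1, fun i => star ((β b).2 i))) ∧
        -- β implements the left action φ_Y by coordinatewise multiplication:
        (∀ b b', MemTail α b → MemTail α b' →
          tailAction α b b' = ((β b).1 * b'.1, fun i => (β b).2 i * b'.2 i)) := by
  rintro ⟨β, hmem, -, -, -, himpl⟩
  have hbB : MemTail α ((1 : A), (0 : ℕ → A)) :=
    ⟨fun i => map_zero α, by simp only [Pi.zero_apply, norm_zero]; exact tendsto_const_nhds⟩
  have key : ∀ k : A, α k = 0 → (β ((1 : A), (0 : ℕ → A))).2 0 * k = k := by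
    intro k hk
    have hb' : MemTail α ((0 : A), fun i => if i = 0 then k else 0) := by
      constructor
      · intro i; dsimp only; split <;> simp [hk]
      · apply Filter.Tendsto.congr' _ (tendsto_const_nhds :
          Filter.Tendsto (fun _ : ℕ => (0 : ℝ)) Filter.atTop (nhds 0))
        filter_upwards [Filter.eventually_ge_atTop 1] with i hi
        have : i ≠ 0 := by omega
        simp [this]
    have h := himpl _ _ hbB hb'
    have h2 := congrFun (congrArg Prod.snd h) 0
    simp only [tailAction] at h2
    simpa using h2.symm
  have he : (β ((1 : A), (0 : ℕ → A))).2 0 = 1 := by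
    have h0 : (1 : A) - (β ((1 : A), (0 : ℕ → A))).2 0 = 0 := by
      apply hess
      intro k hk
      rw [sub_mul, one_mul, key k hk, sub_self]
    exact (sub_eq_zero.mp h0).symm
  have hcl := (hmem _ hbB).1 0
  rw [he, map_one] at hcl
  exact one_ne_zero hcl
end

section
/- In the setting of the previous statement, if such a β existed then, writing 1 for the unit of A and taking (cᵢ') arbitrary with c₁' ∈ ker α, equating the second coordinates of φ_Y(1,(cᵢ))(a',(cᵢ')) = β(1,(cᵢ))·(a',(cᵢ')) yields c₁' = β(1,(cᵢ))₂ · c₁' for all c₁' ∈ ker α; hence β(1,(cᵢ))₂ acts as a unit on the essential ideal ker α, forcing ker α to be unital with unit in ker α, which contradicts ker α being a proper essential ideal of the unital algebra A. -/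
/-- If a map `β` on `B = A ⊕ c₀(ℕ, ker α)` satisfied
`φ_Y(b)(b') = β(b)·b'` for all `b, b' ∈ B`, then equating the second coordinates at
`b = (1, (cᵢ))` would give `c₁' = β(1,(cᵢ))₂ · c₁'` for every `c₁' ∈ ker α`, so the
first `c₀`-coordinate of `β(1,(cᵢ))` would act as a unit on the essential ideal
`ker α`; since `ker α` is a proper essential ideal of the unital algebra `A`, this is
a contradiction. -/
theorem tail_action_unit_computation
    {A : Type*} [NormedRing A] [StarRing A] [CStarRing A] [NormedAlgebra ℂ A]
    [CompleteSpace A] [Nontrivial A]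
    (α : A →⋆ₐ[ℂ] A)
    (hα1 : α 1 = 1)                                            -- α is unital
    (hess : ∀ x : A, (∀ k : A, α k = 0 → x * k = 0) → x = 0)   -- ker α essential
    (β : A × (ℕ → A) → A × (ℕ → A))
    (hβmem : ∀ b, MemTail α b → MemTail α (β b))
    (hβ : ∀ b b', MemTail α b → MemTail α b' →
      tailAction α b b' = ((β b).1 * b'.1, fun i => (β b).2 i * b'.2 i)) :
    -- the forced identity on second coordinates …
    (∀ c : ℕ → A, MemTail α ((1 : A), c) →
        ∀ c₁' : A, α c₁' = 0 → c₁' = (β ((1 : A), c)).2 0 * c₁') ∧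
      -- … leads to a contradiction:
      False := by

  have key : ∀ c : ℕ → A, MemTail α ((1 : A), c) →
      ∀ c₁' : A, α c₁' = 0 → c₁' = (β ((1 : A), c)).2 0 * c₁' := by
    intro c hc c₁' hc₁'
    set d : ℕ → A := fun i => Nat.casesOn i c₁' (fun _ => (0 : A)) with hd
    have hd' : MemTail α ((0 : A), d) := by
      constructor
      · intro i
        cases i with
        | zero => simpa [hd] using hc₁'
        | succ n => simp [hd]
      · have : (fun i => ‖d i‖) =ᶠ[Filter.atTop] (fun _ => (0 : ℝ)) := by
          filter_upwards [Filter.eventually_ge_atTop 1] with i hi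
          cases i with
          | zero => omega
          | succ n => simp [hd]
        exact Filter.Tendsto.congr' this.symm tendsto_const_nhds
    have h := hβ ((1 : A), c) ((0 : A), d) hc hd'
    have h2 := congrFun (congrArg Prod.snd h) 0
    simpa [tailAction, hd, hα1] using h2
  refine ⟨key, ?_⟩
  have h0 : MemTail α ((1 : A), fun _ => (0 : A)) := by
    constructor
    · intro i; simp
    · simp [tendsto_const_nhds]
  set e := (β ((1 : A), fun _ => (0 : A))).2 0 with he
  have heker : α e = 0 := (hβmem _ h0).1 0
  have hunit : ∀ k : A, α k = 0 → (1 - e) * k = 0 := by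
    intro k hk
    have := key (fun _ => (0 : A)) h0 k hk
    rw [sub_mul, one_mul, he, ← this, sub_self]
  have h1e : (1 : A) - e = 0 := hess _ hunit
  have : e = 1 := (sub_eq_zero.mp h1e).symm
  rw [this, hα1] at heker
  exact one_ne_zero heker
end
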